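/- arXiv:0706.1409 — 5 statements merged into one kernel-verified Lean document; each statement's English description precedes it below -/
import Mathlib

section
/- For every real t > 0, the modified Bessel function K₀(t) := ∫₀^∞ exp(-t·cosh x) dx satisfies the differential equation t·(t·K₀''(t) + K₀'(t)) - t²·K₀(t) = 0. -/
open MeasureTheory

noncomputable def K₀ (t : ℝ) : ℝ := ∫ x in Set.Ioi (0:ℝ), Real.exp (-t * Real.cosh x)

/-! Differentiating under the integral sign, `K₀' = -M₁` and `K₀'' = M₂`, where
`Mₙ(t) = ∫₀^∞ coshⁿ x · e^{-t cosh x} dx` and `K₀ = M₀`. Integrating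
`(sinh x · e^{-t cosh x})' = (cosh x - t sinh² x) e^{-t cosh x}` over `(0, ∞)`, where the
primitive vanishes at both ends, and using `sinh² = cosh² - 1` gives `M₁ = t (M₂ - M₀)`,
which is the equation multiplied out. -/

open Real Filter Set Nat Topology

lemma Real.abs_sinh_le_cosh (x : ℝ) : |sinh x| ≤ cosh x := by
  rw [abs_sinh, ← cosh_abs]
  exact (sinh_lt_cosh _).le

lemma Real.self_le_cosh {x : ℝ} (hx : 0 ≤ x) : x ≤ cosh x :=
  (self_le_sinh_iff.mpr hx).trans (sinh_lt_cosh x).le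

lemma pow_mul_exp_neg_le {c y : ℝ} (hc : 0 < c) (hy : 0 ≤ y) (n : ℕ) :
    y ^ n * exp (-c * y) ≤ n ! * (2 / c) ^ n * exp (-(c / 2) * y) := by
  have hpow : (c / 2 * y) ^ n ≤ n ! * exp (c / 2 * y) :=
    (div_le_iff₀' (by positivity)).mp (pow_div_factorial_le_exp _ (by positivity) n)
  calc y ^ n * exp (-c * y) = (2 / c) ^ n * (c / 2 * y) ^ n * exp (-c * y) := by
        rw [← mul_pow]; field_simp
    _ ≤ (2 / c) ^ n * (n ! * exp (c / 2 * y)) * exp (-c * y) := by gcongr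
    _ = n ! * (2 / c) ^ n * exp (-(c / 2) * y) := by
        rw [mul_assoc, mul_assoc, ← exp_add]; ring_nf

noncomputable def coshMoment (n : ℕ) (t : ℝ) : ℝ :=
  ∫ x in Ioi (0:ℝ), cosh x ^ n * exp (-t * cosh x)

lemma K₀_eq_coshMoment_zero : K₀ = coshMoment 0 := by
  funext t
  simp [K₀, coshMoment]

lemma continuous_cosh_pow_mul_exp (n : ℕ) (t : ℝ) :
    Continuous fun x => cosh x ^ n * exp (-t * cosh x) := by
  fun_prop

lemma integrableOn_cosh_pow_mul_exp (n : ℕ) {t : ℝ} (ht : 0 < t) :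
    IntegrableOn (fun x => cosh x ^ n * exp (-t * cosh x)) (Ioi 0) := by
  refine ((exp_neg_integrableOn_Ioi 0 (half_pos ht)).const_mul (n ! * (2 / t) ^ n)).mono'
    (continuous_cosh_pow_mul_exp n t).aestronglyMeasurable.restrict ?_
  filter_upwards [self_mem_ae_restrict measurableSet_Ioi] with x hx
  rw [norm_of_nonneg (by positivity)]
  calc cosh x ^ n * exp (-t * cosh x) ≤ n ! * (2 / t) ^ n * exp (-(t / 2) * cosh x) :=
        pow_mul_exp_neg_le ht (cosh_pos x).le n
    _ ≤ n ! * (2 / t) ^ n * exp (-(t / 2) * x) := by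
        gcongr _ * exp ?_
        nlinarith [self_le_cosh hx.out.le]

lemma hasDerivAt_coshMoment (n : ℕ) {t : ℝ} (ht : 0 < t) :
    HasDerivAt (coshMoment n) (-coshMoment (n + 1) t) t := by
  -- for `s > t / 2` the derivative in `s` is dominated by `coshⁿ⁺¹ x · e^{-(t/2) cosh x}`
  have h := hasDerivAt_integral_of_dominated_loc_of_deriv_le (μ := volume.restrict (Ioi 0))
    (F := fun s x => cosh x ^ n * exp (-s * cosh x))
    (F' := fun s x => -(cosh x ^ (n + 1) * exp (-s * cosh x)))
    (Ioi_mem_nhds (half_lt_self ht))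
    (.of_forall fun s => (continuous_cosh_pow_mul_exp n s).aestronglyMeasurable)
    (integrableOn_cosh_pow_mul_exp n ht)
    (continuous_cosh_pow_mul_exp (n + 1) t).neg.aestronglyMeasurable
    (.of_forall fun x s (hst : t / 2 < s) => ?_)
    (integrableOn_cosh_pow_mul_exp (n + 1) (half_pos ht))
    (.of_forall fun x s _ => ?_)
  · rw [integral_neg] at h
    exact h.2
  · rw [norm_neg, norm_of_nonneg (by positivity)]
    gcongr
  · exact ((((hasDerivAt_neg s).mul_const (cosh x)).exp).const_mul (cosh x ^ n)).congr_deriv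
      (by ring)

lemma deriv_K₀ {t : ℝ} (ht : 0 < t) : deriv K₀ t = -coshMoment 1 t := by
  rw [K₀_eq_coshMoment_zero]
  exact (hasDerivAt_coshMoment 0 ht).deriv

lemma deriv_deriv_K₀ {t : ℝ} (ht : 0 < t) : deriv (deriv K₀) t = coshMoment 2 t := by
  have hloc : deriv K₀ =ᶠ[𝓝 t] -coshMoment 1 := by
    filter_upwards [Ioi_mem_nhds ht] with s hs using deriv_K₀ hs
  rw [hloc.deriv_eq, (hasDerivAt_coshMoment 1 ht).neg.deriv, neg_neg]

lemma coshMoment_one_eq {t : ℝ} (ht : 0 < t) :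
    coshMoment 1 t = t * (coshMoment 2 t - coshMoment 0 t) := by
  set g := fun x => cosh x ^ 1 * exp (-t * cosh x) -
    t * (cosh x ^ 2 * exp (-t * cosh x) - cosh x ^ 0 * exp (-t * cosh x))
  have hderiv : ∀ x, HasDerivAt (fun x => sinh x * exp (-t * cosh x)) (g x) x := fun x =>
    ((hasDerivAt_sinh x).mul (((hasDerivAt_cosh x).const_mul (-t)).exp)).congr_deriv
      (by linear_combination (-t * exp (-t * cosh x)) * sinh_sq x)
  have hint := fun n => integrableOn_cosh_pow_mul_exp n ht
  have hint₂₀ : IntegrableOn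
      (fun x => cosh x ^ 2 * exp (-t * cosh x) - cosh x ^ 0 * exp (-t * cosh x)) (Ioi 0) :=
    (hint 2).sub (hint 0)
  have hg : IntegrableOn g (Ioi 0) := (hint 1).sub (hint₂₀.const_mul t)
  have hf : IntegrableOn (fun x => sinh x * exp (-t * cosh x)) (Ioi 0) := by
    refine (hint 1).mono' (by fun_prop) (.of_forall fun x => ?_)
    rw [norm_mul, norm_of_nonneg (exp_pos _).le, pow_one, norm_eq_abs]
    gcongr
    exact abs_sinh_le_cosh x
  have hFTC := integral_Ioi_of_hasDerivAt_of_tendsto' (fun x _ => hderiv x) hg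
    (tendsto_zero_of_hasDerivAt_of_integrableOn_Ioi (fun x _ => hderiv x) hg hf)
  have hsplit : ∫ x in Ioi 0, g x = coshMoment 1 t - t * (coshMoment 2 t - coshMoment 0 t) := by
    rw [integral_sub (hint 1) (hint₂₀.const_mul t), integral_const_mul,
      integral_sub (hint 2) (hint 0)]
    rfl
  rw [hsplit, sinh_zero, zero_mul, sub_zero] at hFTC
  exact sub_eq_zero.mp hFTC

theorem bessel_ode (t : ℝ) (ht : 0 < t) :
    t * (t * deriv (deriv K₀) t + deriv K₀ t) - t ^ 2 * K₀ t = 0 := by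
  rw [deriv_deriv_K₀ ht, deriv_K₀ ht, K₀_eq_coshMoment_zero]
  linear_combination (-t) * coshMoment_one_eq ht
end

section
/- The set of D-finite formal power series over ℂ is closed under multiplication: if f and g are D-finite formal power series, then the product f·g is D-finite. Moreover, if f satisfies an equation of order r and g one of order s, then f·g satisfies a linear differential equation with polynomial coefficients of order at most r·s. -/
/-!
Let `F` be the `ℂ[X]`-submodule of `ℂ⟦X⟧` spanned by `f, f', …, f^(r-1)` and `G` the one spanned
by `g, …, g^(s-1)`. The equation of `f` gives `a_r • F' ⊆ F`, that of `g` gives `b_s • G' ⊆ G`, so by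
the Leibniz rule `A • (F * G)' ⊆ F * G` for `A = a_r b_s`, and inductively
`A ^ k • (f g)^(k) ∈ F * G` for every `k`. As `F * G` is spanned by the `r s` products
`f^(i) g^(j)`, the `r s + 1` elements `A ^ k • (f g)^(k)`, `k ≤ r s`, satisfy a nontrivial
`ℂ[X]`-linear relation, which is the required equation.
-/

open Polynomial Submodule

theorem exists_sum_smul_eq_zero_of_mem_span {R M ι κ : Type*} [Ring R] [StrongRankCondition R]
    [AddCommGroup M] [Module R M] [Fintype ι] [Fintype κ] (u : κ → M) (v : ι → M)
    (hcard : Fintype.card κ < Fintype.card ι) (hv : ∀ i, v i ∈ span R (Set.range u)) :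
    ∃ c : ι → R, ∑ i, c i • v i = 0 ∧ ∃ i, c i ≠ 0 := by
  classical
  refine Fintype.not_linearIndependent_iff.mp fun hli => hcard.not_ge ?_
  have hle := linearIndependent_le_span' v hli (Set.range u) (Set.range_subset_iff.mpr hv)
  rw [Cardinal.mk_fintype, Nat.cast_le] at hle
  exact hle.trans (Fintype.card_range_le u)

theorem Polynomial.mul_derivative_pow {R : Type*} [CommSemiring R] (p : R[X]) (k : ℕ) :
    p * derivative (p ^ k) = (k : R[X]) * derivative p * p ^ k := by
  cases k with
  | zero => simp
  | succ k =>
    simp only [derivative_pow_succ, Nat.cast_add, Nat.cast_one, map_add, map_natCast, map_one]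
    ring

namespace PowerSeries

variable {R : Type*} [CommRing R]

theorem polynomial_smul_eq_coe_mul (p : R[X]) (x : R⟦X⟧) : p • x = (p : R⟦X⟧) * x := by
  rw [Algebra.smul_def, algebraMap_apply', Algebra.algebraMap_self, map_id]
  rfl

theorem derivative_polynomial_smul (p : R[X]) (x : R⟦X⟧) :
    d⁄dX R (p • x) = Polynomial.derivative p • x + p • d⁄dX R x := by
  simp only [polynomial_smul_eq_coe_mul, Derivation.leibniz, derivative_coe, smul_eq_mul]
  ring

def IsDerivStable (A : R[X]) (N : Submodule R[X] R⟦X⟧) : Prop :=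
  ∀ x ∈ N, A • d⁄dX R x ∈ N

namespace IsDerivStable

variable {A B : R[X]} {N P : Submodule R[X] R⟦X⟧}

theorem mul (hN : IsDerivStable A N) (hP : IsDerivStable B P) :
    IsDerivStable (A * B) (N * P) := by
  intro x hx
  refine Submodule.mul_induction_on hx (fun m hm n hn => ?_) fun x y hx hy => ?_
  · have hleibniz : (A * B) • d⁄dX R (m * n)
        = (A • d⁄dX R m) * (B • n) + (A • m) * (B • d⁄dX R n) := by
      simp only [Derivation.leibniz, smul_eq_mul, Algebra.smul_def, map_mul]
      ring
    rw [hleibniz]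
    exact add_mem (mul_mem_mul (hN m hm) (P.smul_mem B hn))
      (mul_mem_mul (N.smul_mem A hm) (hP n hn))
  · rw [map_add, smul_add]
    exact add_mem hx hy

theorem pow_smul_iterate_mem (hN : IsDerivStable A N) {x : R⟦X⟧} (hx : x ∈ N) (k : ℕ) :
    A ^ k • (d⁄dX R)^[k] x ∈ N := by
  induction k with
  | zero => simpa using hx
  | succ k ih =>
    set y := (d⁄dX R)^[k] x
    -- Leibniz: `A • (A ^ k • y)' = (k A') • (A ^ k • y) + A ^ (k + 1) • y'`.
    have hstep : A ^ (k + 1) • (d⁄dX R)^[k + 1] x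
        = A • d⁄dX R (A ^ k • y) - ((k : R[X]) * Polynomial.derivative A) • (A ^ k • y) := by
      rw [Function.iterate_succ_apply', derivative_polynomial_smul, smul_add, smul_smul,
        smul_smul, smul_smul, mul_derivative_pow, pow_succ']
      abel
    rw [hstep]
    exact sub_mem (hN _ ih) (N.smul_mem _ ih)

end IsDerivStable

noncomputable def iteratedDerivSpan (f : R⟦X⟧) (r : ℕ) : Submodule R[X] R⟦X⟧ :=
  span R[X] (Set.range fun i : Fin r => (d⁄dX R)^[i] f)

theorem iteratedDerivSpan_mul_iteratedDerivSpan (f g : R⟦X⟧) (r s : ℕ) :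
    iteratedDerivSpan f r * iteratedDerivSpan g s =
      span R[X] (Set.range fun p : Fin r × Fin s => (d⁄dX R)^[p.1] f * (d⁄dX R)^[p.2] g) := by
  rw [iteratedDerivSpan, iteratedDerivSpan, span_mul_span, ← Set.image2_mul, Set.image2_range]

variable {f : R⟦X⟧} {r : ℕ} {a : Fin (r + 1) → R[X]}

theorem leading_smul_iterate_mem_iteratedDerivSpan
    (hf : ∑ i : Fin (r + 1), (a i : R⟦X⟧) * (d⁄dX R)^[i] f = 0) :
    a (Fin.last r) • (d⁄dX R)^[r] f ∈ iteratedDerivSpan f r := by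
  rw [Fin.sum_univ_castSucc, add_eq_zero_iff_eq_neg'] at hf
  simp only [Fin.val_castSucc, Fin.val_last, ← polynomial_smul_eq_coe_mul] at hf
  rw [hf]
  exact neg_mem (sum_mem fun i _ => smul_mem _ _ (subset_span ⟨i, rfl⟩))

theorem isDerivStable_iteratedDerivSpan
    (hf : ∑ i : Fin (r + 1), (a i : R⟦X⟧) * (d⁄dX R)^[i] f = 0) :
    IsDerivStable (a (Fin.last r)) (iteratedDerivSpan f r) := by
  intro x hx
  induction hx using span_induction with
  | mem x hx =>
    obtain ⟨i, rfl⟩ := hx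
    rw [← Function.iterate_succ_apply' (d⁄dX R)]
    rcases (Nat.succ_le_of_lt i.isLt).lt_or_eq with hlt | heq
    · exact smul_mem _ _ (subset_span ⟨⟨i + 1, hlt⟩, rfl⟩)
    · rw [heq]
      exact leading_smul_iterate_mem_iteratedDerivSpan hf
  | zero => simp
  | add x y _ _ hx hy =>
    rw [map_add, smul_add]
    exact add_mem hx hy
  | smul p x hx' hx =>
    rw [derivative_polynomial_smul, smul_add, smul_smul, smul_comm]
    exact add_mem (smul_mem _ _ hx') (smul_mem _ _ hx)

theorem self_mem_iteratedDerivSpan [IsDomain R] (ha : a (Fin.last r) ≠ 0)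
    (hf : ∑ i : Fin (r + 1), (a i : R⟦X⟧) * (d⁄dX R)^[i] f = 0) :
    f ∈ iteratedDerivSpan f r := by
  cases r with
  | zero =>
    have ha : a 0 ≠ 0 := ha
    obtain rfl : f = 0 := by simpa [ha] using hf
    exact zero_mem _
  | succ r => exact subset_span ⟨0, rfl⟩

end PowerSeries

open PowerSeries

theorem isDFinite_mul {f g : PowerSeries ℂ} (r s : ℕ)
    (a : Fin (r + 1) → Polynomial ℂ) (ha : a (Fin.last r) ≠ 0)
    (hf : ∑ i : Fin (r + 1), (a i : PowerSeries ℂ) * ((fun h => d⁄dX ℂ h)^[(i : ℕ)] f) = 0)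
    (b : Fin (s + 1) → Polynomial ℂ) (hb : b (Fin.last s) ≠ 0)
    (hg : ∑ i : Fin (s + 1), (b i : PowerSeries ℂ) * ((fun h => d⁄dX ℂ h)^[(i : ℕ)] g) = 0) :
    ∃ c : Fin (r * s + 1) → Polynomial ℂ,
      (∃ i, c i ≠ 0) ∧
      ∑ i : Fin (r * s + 1), (c i : PowerSeries ℂ) * ((fun h => d⁄dX ℂ h)^[(i : ℕ)] (f * g)) = 0 := by
  set A := a (Fin.last r) * b (Fin.last s)
  have hstable : IsDerivStable A (iteratedDerivSpan f r * iteratedDerivSpan g s) :=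
    (isDerivStable_iteratedDerivSpan hf).mul (isDerivStable_iteratedDerivSpan hg)
  have hfg : f * g ∈ iteratedDerivSpan f r * iteratedDerivSpan g s :=
    mul_mem_mul (self_mem_iteratedDerivSpan ha hf) (self_mem_iteratedDerivSpan hb hg)
  obtain ⟨c, hc, i, hi⟩ := exists_sum_smul_eq_zero_of_mem_span
    (fun p : Fin r × Fin s => (d⁄dX ℂ)^[p.1] f * (d⁄dX ℂ)^[p.2] g)
    (fun k : Fin (r * s + 1) => A ^ (k : ℕ) • (d⁄dX ℂ)^[k] (f * g)) (by simp) fun k => by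
      rw [← iteratedDerivSpan_mul_iteratedDerivSpan]
      exact hstable.pow_smul_iterate_mem hfg k
  refine ⟨fun k => c k * A ^ (k : ℕ), ⟨i, mul_ne_zero hi (pow_ne_zero _ (mul_ne_zero ha hb))⟩, ?_⟩
  simpa only [polynomial_smul_eq_coe_mul, Polynomial.coe_mul, mul_assoc] using hc
end

section
/- If y : (0,∞) → ℝ is twice differentiable and satisfies θ²y = t²y with θ = t·d/dt (i.e., t²y'' + ty' - t²y = 0), then h := y² satisfies t²·h''' + 3t·h'' + (1 - 4t²)·h' - 4t·h = 0 on (0,∞). -/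
theorem square_of_bessel_solution_ode
    (y y' y'' : ℝ → ℝ)
    (hy : ∀ t ∈ Set.Ioi (0:ℝ), HasDerivAt y (y' t) t)
    (hy' : ∀ t ∈ Set.Ioi (0:ℝ), HasDerivAt y' (y'' t) t)
    (hode : ∀ t ∈ Set.Ioi (0:ℝ), t ^ 2 * y'' t + t * y' t - t ^ 2 * y t = 0) :
    ∀ t ∈ Set.Ioi (0:ℝ),
      t ^ 2 * iteratedDeriv 3 (fun s => (y s) ^ 2) t
        + 3 * t * iteratedDeriv 2 (fun s => (y s) ^ 2) t
        + (1 - 4 * t ^ 2) * deriv (fun s => (y s) ^ 2) t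
        - 4 * t * (y t) ^ 2 = 0 := by
  set h : ℝ → ℝ := fun s => (y s) ^ 2 with hh
  -- express y'' via the ODE
  have hE : ∀ t ∈ Set.Ioi (0:ℝ), y'' t = y t - y' t / t := by
    intro t ht
    have htne : (t:ℝ) ≠ 0 := ne_of_gt ht
    have h0 : t * (t * y'' t + y' t - t * y t) = 0 := by linear_combination hode t ht
    have h1 : t * y'' t + y' t - t * y t = 0 := by
      rcases mul_eq_zero.mp h0 with h | h
      · exact absurd h htne
      · exact h
    field_simp
    linear_combination h1
  -- first derivative
  have hD1 : ∀ t ∈ Set.Ioi (0:ℝ), HasDerivAt h (2 * y t * y' t) t := by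
    intro t ht
    have : HasDerivAt (fun s => y s * y s) (y' t * y t + y t * y' t) t := ((hy t ht).mul (hy t ht))
    convert this using 1 <;> [skip; ring]
    ext s; simp [h, sq]
  have hd1 : Set.EqOn (deriv h) (fun t => 2 * y t * y' t) (Set.Ioi 0) := by
    intro t ht; exact (hD1 t ht).deriv
  -- second derivative target function, expressed without y''
  set G2 : ℝ → ℝ := fun t => 2 * (y' t) ^ 2 + 2 * y t * (y t - y' t / t) with hG2
  have hD2 : ∀ t ∈ Set.Ioi (0:ℝ),
      HasDerivAt (fun t => 2 * y t * y' t) (2 * (y' t) ^ 2 + 2 * y t * y'' t) t := by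
    intro t ht
    have : HasDerivAt (fun s => 2 * y s * y' s) (2 * y' t * y' t + 2 * y t * y'' t) t :=
      (((hy t ht).const_mul 2).mul (hy' t ht))
    convert this using 1
    ring
  have hd2 : Set.EqOn (fun t => iteratedDeriv 2 h t) G2 (Set.Ioi 0) := by
    intro t ht
    have hev : deriv h =ᶠ[nhds t] (fun t => 2 * y t * y' t) :=
      Filter.eventuallyEq_of_mem (isOpen_Ioi.mem_nhds ht) hd1
    calc iteratedDeriv 2 h t = deriv (deriv h) t := by
            rw [iteratedDeriv_succ, iteratedDeriv_one]
      _ = deriv (fun t => 2 * y t * y' t) t := hev.deriv_eq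
      _ = 2 * (y' t) ^ 2 + 2 * y t * y'' t := (hD2 t ht).deriv
      _ = G2 t := by rw [hG2]; simp only; rw [hE t ht]
  -- derivative of G2
  have hD3 : ∀ t ∈ Set.Ioi (0:ℝ),
      HasDerivAt G2 (4 * y' t * y'' t
        + 2 * (y' t * (y t - y' t / t) + y t * (y' t - (y'' t * t - y' t) / t ^ 2))) t := by
    intro t ht
    have htne : (t:ℝ) ≠ 0 := ne_of_gt ht
    have hdiv : HasDerivAt (fun s => y' s / s) ((y'' t * t - y' t * 1) / t ^ 2) t :=
      (hy' t ht).div (hasDerivAt_id t) htne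
    have h1 : HasDerivAt (fun s => 2 * (y' s) ^ 2) (2 * (2 * y' t * y'' t)) t := by
      exact ((hy' t ht).pow 2).const_mul 2 |>.congr_deriv (by ring)
    have h2 : HasDerivAt (fun s => 2 * y s * (y s - y' s / s))
        (2 * y' t * (y t - y' t / t) + 2 * y t * (y' t - (y'' t * t - y' t * 1) / t ^ 2)) t :=
      (((hy t ht).const_mul 2).mul ((hy t ht).sub hdiv))
    exact (h1.add h2).congr_deriv (by ring)
  intro t ht
  have htne : (t:ℝ) ≠ 0 := ne_of_gt ht
  have e1 : deriv h t = 2 * y t * y' t := hd1 ht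
  have e2 : iteratedDeriv 2 h t = G2 t := hd2 ht
  have hev2 : (fun t => iteratedDeriv 2 h t) =ᶠ[nhds t] G2 :=
    Filter.eventuallyEq_of_mem (isOpen_Ioi.mem_nhds ht) hd2
  have e3 : iteratedDeriv 3 h t = 4 * y' t * y'' t
      + 2 * (y' t * (y t - y' t / t) + y t * (y' t - (y'' t * t - y' t) / t ^ 2)) := by
    calc iteratedDeriv 3 h t = deriv (fun t => iteratedDeriv 2 h t) t := by
            rw [iteratedDeriv_succ]
      _ = deriv G2 t := hev2.deriv_eq
      _ = _ := (hD3 t ht).deriv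
  rw [e1, e2, e3, hG2, hE t ht]
  field_simp
  ring
end

section
/- Let a, b be rational functions (or smooth functions) and y a smooth function satisfying θ²y + a·θy + b·y = 0, where θ = t·d/dt. Define operators L₀ = 1, L₁ = θ, and L_{k+1} = (θ + k·a)∘L_k + b·k(n-k+1)·L_{k-1} for 1 ≤ k ≤ n. Then for all 0 ≤ k ≤ n+1, L_k(yⁿ) = n(n-1)⋯(n-k+1)·y^{n-k}·(θy)^k; in particular L_{n+1}(yⁿ) = 0. -/
/-- The derivation θ = t · d/dt acting on functions on ℝ. -/
noncomputable def θ (f : ℝ → ℝ) : ℝ → ℝ := fun t => t * deriv f t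

/-- The operators L_k of the Bronstein–Mulders–Weil recursion:
L₀ = 1, L₁ = θ, L_{k+1} = (θ + k·a)∘L_k + b·k·(n-k+1)·L_{k-1}. -/
noncomputable def L (a b : ℝ → ℝ) (n : ℕ) : ℕ → (ℝ → ℝ) → (ℝ → ℝ)
  | 0 => fun f => f
  | 1 => fun f => θ f
  | (k + 2) => fun f t =>
      θ (L a b n (k + 1) f) t + ((k : ℝ) + 1) * a t * L a b n (k + 1) f t
        + b t * ((k : ℝ) + 1) * ((n : ℝ) - ((k : ℝ) + 1) + 1) * L a b n k f t

lemma hasDerivAt_theta (y : ℝ → ℝ) (hy : ContDiff ℝ (⊤ : ℕ∞) y) (t : ℝ) :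
    HasDerivAt (θ y) (deriv y t + t * deriv (deriv y) t) t := by
  have h2 : Differentiable ℝ (deriv y) :=
    ((contDiff_infty_iff_deriv.mp (hy.of_le (by simp))).2).differentiable (by simp)
  have := (hasDerivAt_id t).mul ((h2 t).hasDerivAt)
  rw [show θ y = id * deriv y from by ext s; simp [θ]]
  simpa using this

lemma theta_mul_pow (y : ℝ → ℝ) (hy : ContDiff ℝ (⊤ : ℕ∞) y) (c : ℝ) (m j : ℕ) (t : ℝ) :
    θ (fun s => c * y s ^ m * θ y s ^ j) t
      = c * m * y t ^ (m-1) * θ y t ^ (j+1)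
        + c * j * y t ^ m * θ y t ^ (j-1) * θ (θ y) t := by
  have hθ := hasDerivAt_theta y hy t
  have h1 : HasDerivAt y (deriv y t) t := (hy.differentiable (by simp) t).hasDerivAt
  have h := (((h1.pow m).const_mul c).mul (hθ.pow j))
  have hd := h.deriv
  have hθd := hθ.deriv
  simp only [θ] at hd hθd ⊢
  rw [show (fun s => c * y s ^ m * (s * deriv y s) ^ j) = ((fun y_1 => c * (y ^ m) y_1) * θ y ^ j) from by ext s; simp [θ]]
  rw [hd, hθd]
  simp only [Pi.pow_apply, θ]
  rw [pow_succ]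
  ring

theorem symmetric_power_formula
    (a b y : ℝ → ℝ) (ha : ContDiff ℝ (⊤ : ℕ∞) a) (hb : ContDiff ℝ (⊤ : ℕ∞) b) (hy : ContDiff ℝ (⊤ : ℕ∞) y)
    (n : ℕ) (hn : 1 ≤ n)
    (hode : ∀ t, θ (θ y) t + a t * θ y t + b t * y t = 0) :
    ∀ k ≤ n + 1, ∀ t,
      L a b n k (fun s => (y s) ^ n) t
        = (∏ i ∈ Finset.range k, ((n : ℝ) - (i : ℝ))) * (y t) ^ (n - k) * (θ y t) ^ k := by
  intro k
  induction k using Nat.strong_induction_on with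
  | _ k ih =>
    rcases k with _ | _ | k
    · intro _ t; simp [L]
    · intro _ t
      have h1 : HasDerivAt y (deriv y t) t := (hy.differentiable (by simp) t).hasDerivAt
      have hd := (h1.pow n).deriv
      simp only [L, θ]
      rw [show (fun s => y s ^ n) = y ^ n from rfl, hd]
      simp [Finset.prod_range_one, pow_succ]
      ring
    · intro hk t
      obtain ⟨m, rfl⟩ : ∃ m, n = m + (k + 1) := ⟨n - (k+1), by omega⟩
      have ih1 := funext (ih (k+1) (by omega) (by omega))
      have ih0 := funext (ih k (by omega) (by omega))
      simp only [L]
      rw [ih1, ih0]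
      rw [theta_mul_pow y hy _ _ _ t]
      have hode' : θ (θ y) t = -(a t * θ y t + b t * y t) := by linarith [hode t]
      rw [hode']
      have e1 : m + (k+1) - (k+1) = m := by omega
      have e2 : m + (k+1) - (k+2) = m - 1 := by omega
      have e3 : m + (k+1) - k = m + 1 := by omega
      rw [e1, e2, e3]
      simp only [Finset.prod_range_succ]
      push_cast
      rw [pow_succ (θ y t) (k+1), pow_succ (θ y t) k, pow_succ (y t) m]
      ring
end

section
/- The function d(u) := (e^{-u²} - 1 + √π·u·erf(u))/u², extended by d(0) = 1, satisfies 2u²·d'''(u) + 4u(3+u²)·d''(u) + 4(3+4u²)·d'(u) + 8u·d(u) = 0 for all u. -/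
open MeasureTheory

/-- The error function erf(u) = (2/√π) ∫₀ᵘ exp(-x²) dx. -/
noncomputable def erf (u : ℝ) : ℝ :=
  (2 / Real.sqrt Real.pi) * ∫ x in (0:ℝ)..u, Real.exp (-x ^ 2)

/-- d(u) = (e^{-u²} − 1 + √π·u·erf(u))/u², extended by d(0) = 1. -/
noncomputable def d (u : ℝ) : ℝ :=
  if u = 0 then 1
  else (Real.exp (-u ^ 2) - 1 + Real.sqrt Real.pi * u * erf u) / u ^ 2

/-!
Off the origin `N := u² d` is the numerator `e^{-u²} - 1 + √π u erf u`, whose second derivative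
is `2 e^{-u²}`, so `N''' + 2u N'' = 0`. Expanding `N = u² d` by the Leibniz rule turns
`2 (N''' + 2u N'')` into the left-hand side of the equation. At `u = 0` the equation reduces to
`12 d'(0) = 0`, which holds because `d` is even (`erf` is odd).
-/

open Real Filter Topology
open scoped ContDiff

theorem Function.Even.deriv {𝕜 F : Type*} [NontriviallyNormedField 𝕜] [NormedAddCommGroup F]
    [NormedSpace 𝕜 F] {f : 𝕜 → F} (hf : f.Even) : (deriv f).Odd := fun x => by
  rw [← neg_neg (_root_.deriv f (-x)), ← deriv_comp_neg, funext hf]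

theorem iteratedDeriv_sq_mul_ode {y : ℝ → ℝ} {u : ℝ} (hy : ContDiffAt ℝ 3 y u) :
    2 * (iteratedDeriv 3 (fun x => x ^ 2 * y x) u
        + 2 * u * iteratedDeriv 2 (fun x => x ^ 2 * y x) u)
      = 2 * u ^ 2 * iteratedDeriv 3 y u + 4 * u * (3 + u ^ 2) * iteratedDeriv 2 y u
        + 4 * (3 + 4 * u ^ 2) * deriv y u + 8 * u * y u := by
  have hsq : ContDiffAt ℝ 3 (fun x : ℝ => x ^ 2) u := by fun_prop
  rw [iteratedDeriv_fun_mul hsq hy,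
    iteratedDeriv_fun_mul (hsq.of_le (by norm_num)) (hy.of_le (by norm_num))]
  simp only [Finset.sum_range_succ, Finset.sum_range_zero, iteratedDeriv_pow]
  norm_num [Nat.choose, Nat.descFactorial]
  ring

theorem hasDerivAt_exp_neg_sq (u : ℝ) :
    HasDerivAt (fun x => exp (-x ^ 2)) (-2 * u * exp (-u ^ 2)) u :=
  ((hasDerivAt_pow 2 u).fun_neg.exp).congr_deriv (by ring)

theorem hasDerivAt_erf (u : ℝ) : HasDerivAt erf (2 / √π * exp (-u ^ 2)) u :=
  ((by fun_prop : Continuous fun x : ℝ => exp (-x ^ 2)).integral_hasStrictDerivAt 0 u)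
    |>.hasDerivAt.const_mul _

theorem contDiff_erf : ContDiff ℝ ∞ erf := by
  refine contDiff_infty_iff_deriv.mpr ⟨fun u => (hasDerivAt_erf u).differentiableAt, ?_⟩
  rw [show deriv erf = fun u => 2 / √π * exp (-u ^ 2) from funext fun u => (hasDerivAt_erf u).deriv]
  fun_prop

theorem erf_odd : Function.Odd erf := fun u => by
  have h := intervalIntegral.integral_comp_neg (a := 0) (b := u) (fun x => exp (-x ^ 2))
  simp only [neg_sq, neg_zero] at h
  rw [erf, erf, h, intervalIntegral.integral_symm]
  ring

theorem d_even : Function.Even d := fun u => by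
  simp only [d, neg_eq_zero, neg_sq, erf_odd.eq]
  ring_nf

noncomputable def dNum (u : ℝ) : ℝ := exp (-u ^ 2) - 1 + √π * u * erf u

theorem d_eq_dNum_div {u : ℝ} (hu : u ≠ 0) : d u = dNum u / u ^ 2 := if_neg hu

theorem contDiff_dNum : ContDiff ℝ ∞ dNum := by
  have := contDiff_erf
  unfold dNum
  fun_prop

theorem deriv_dNum : deriv dNum = fun u => √π * erf u := by
  funext u
  refine HasDerivAt.deriv ((((hasDerivAt_exp_neg_sq u).sub_const 1).fun_add
    (((hasDerivAt_id' u).const_mul √π).fun_mul (hasDerivAt_erf u))).congr_deriv ?_)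
  field_simp
  ring

theorem iteratedDeriv_two_dNum : iteratedDeriv 2 dNum = fun u => 2 * exp (-u ^ 2) := by
  rw [iteratedDeriv_succ', iteratedDeriv_one, deriv_dNum]
  funext u
  refine HasDerivAt.deriv (((hasDerivAt_erf u).const_mul √π).congr_deriv ?_)
  field_simp

theorem iteratedDeriv_three_dNum (u : ℝ) : iteratedDeriv 3 dNum u = -4 * u * exp (-u ^ 2) := by
  rw [iteratedDeriv_succ, iteratedDeriv_two_dNum]
  exact ((hasDerivAt_exp_neg_sq u).const_mul 2).congr_deriv (by ring) |>.deriv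

theorem dNum_ode (u : ℝ) : iteratedDeriv 3 dNum u + 2 * u * iteratedDeriv 2 dNum u = 0 := by
  rw [iteratedDeriv_three_dNum, iteratedDeriv_two_dNum]
  ring

theorem contDiffAt_d {u : ℝ} (hu : u ≠ 0) : ContDiffAt ℝ ∞ d u := by
  refine (contDiff_dNum.contDiffAt.div (contDiffAt_id.pow 2) (pow_ne_zero 2 hu))
    |>.congr_of_eventuallyEq ?_
  filter_upwards [eventually_ne_nhds hu] with x hx using d_eq_dNum_div hx

theorem d_ode (u : ℝ) :
    2 * u ^ 2 * iteratedDeriv 3 d u + 4 * u * (3 + u ^ 2) * iteratedDeriv 2 d u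
      + 4 * (3 + 4 * u ^ 2) * deriv d u + 8 * u * d u = 0 := by
  rcases eq_or_ne u 0 with rfl | hu
  · simp [d_even.deriv.map_zero]
  have hNum : dNum =ᶠ[𝓝 u] fun x => x ^ 2 * d x := by
    filter_upwards [eventually_ne_nhds hu] with x hx
    rw [d_eq_dNum_div hx, mul_div_cancel₀ _ (pow_ne_zero 2 hx)]
  rw [← iteratedDeriv_sq_mul_ode ((contDiffAt_d hu).of_le (WithTop.coe_le_coe.mpr le_top)),
    ← hNum.iteratedDeriv_eq, ← hNum.iteratedDeriv_eq, dNum_ode, mul_zero]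
end
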